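/- arXiv:1711.07500 — 5 statements merged into one kernel-verified Lean document; each statement's English description precedes it below -/
import Mathlib

section
/- Noise-resilience bound: suppose Φ_k and Φ̃_k (k = 0,…,s−1) are linear maps on a normed space with operator norms ‖Φ̃_k‖ ≤ 1, ‖Φ̃_k − Φ_k‖ ≤ ε, and suppose there is 0 ≤ λ < 1 such that for every k and every vector h̄ in a subspace W invariant under all Φ_j, ‖Φ_{k+1}∘…∘Φ_{s-1}(h̄)‖ ≤ λ^{s-1-k}‖h̄‖. Then for h̄ ∈ W with ‖h̄‖ ≤ 1, ‖(Φ̃_0∘…∘Φ̃_{s-1})(h̄) − (Φ_0∘…∘Φ_{s-1})(h̄)‖ ≤ ε/(1−λ), independent of s. -/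
/-- Composition `Φ n ∘ Φ (n+1) ∘ ⋯ ∘ Φ (m-1)` of continuous linear maps,
the identity when `m ≤ n`. -/
noncomputable def chanCompL {V : Type*} [NormedAddCommGroup V] [NormedSpace ℂ V]
    (Φ : ℕ → (V →L[ℂ] V)) (n m : ℕ) : V →L[ℂ] V :=
  ((List.range (m - n)).map (fun j => Φ (n + j))).foldr (fun f g => f.comp g)
    (ContinuousLinearMap.id ℂ V)

lemma chanCompL_of_le {V : Type*} [NormedAddCommGroup V] [NormedSpace ℂ V]
    (Φ : ℕ → (V →L[ℂ] V)) {n m : ℕ} (h : m ≤ n) :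
    chanCompL Φ n m = ContinuousLinearMap.id ℂ V := by
  simp [chanCompL, Nat.sub_eq_zero_of_le h]

lemma chanCompL_succ {V : Type*} [NormedAddCommGroup V] [NormedSpace ℂ V]
    (Φ : ℕ → (V →L[ℂ] V)) {n m : ℕ} (h : n < m) :
    chanCompL Φ n m = (Φ n).comp (chanCompL Φ (n + 1) m) := by
  unfold chanCompL
  have h1 : m - n = (m - (n + 1)) + 1 := by omega
  rw [h1, List.range_succ_eq_map]
  have h2 : (fun j => Φ (n + j)) ∘ Nat.succ = fun j => Φ (n + 1 + j) := by
    funext j; simp only [Function.comp]; congr 1; omega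
  simp only [List.map_cons, List.foldr_cons, List.map_map, add_zero, h2]

theorem noise_resilience_bound {V : Type*} [NormedAddCommGroup V] [NormedSpace ℂ V]
    (s : ℕ) (Φ Φt : ℕ → (V →L[ℂ] V)) (ε lam : ℝ) (hε : 0 ≤ ε)
    (hlam0 : 0 ≤ lam) (hlam1 : lam < 1)
    (W : Submodule ℂ V)
    (hWinv : ∀ j, ∀ w ∈ W, Φ j w ∈ W)
    (hΦt : ∀ k, ‖Φt k‖ ≤ 1)
    (hdiff : ∀ k, ‖Φt k - Φ k‖ ≤ ε)
    (hcontr : ∀ k, ∀ hbar ∈ W, ‖chanCompL Φ (k + 1) s hbar‖ ≤ lam ^ (s - 1 - k) * ‖hbar‖)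
    (hbar : V) (hmem : hbar ∈ W) (hnorm : ‖hbar‖ ≤ 1) :
    ‖chanCompL Φt 0 s hbar - chanCompL Φ 0 s hbar‖ ≤ ε / (1 - lam) := by
  have hpos : 0 < 1 - lam := by linarith
  -- main induction: for all n, the tail difference is bounded by ε * ∑_{j < s - n} lam^j
  have key : ∀ d n, s - n = d →
      ‖chanCompL Φt n s hbar - chanCompL Φ n s hbar‖ ≤
        ε * ∑ j ∈ Finset.range d, lam ^ j := by
    intro d
    induction d with
    | zero =>
      intro n hn
      rw [chanCompL_of_le Φt (by omega), chanCompL_of_le Φ (by omega)]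
      simp
    | succ d ih =>
      intro n hn
      have hns : n < s := by omega
      rw [chanCompL_succ Φt hns, chanCompL_succ Φ hns]
      set A := chanCompL Φt (n + 1) s hbar with hA
      set B := chanCompL Φ (n + 1) s hbar with hB
      have hsplit : (Φt n) A - (Φ n) B = (Φt n) (A - B) + ((Φt n - Φ n)) B := by
        simp [map_sub, ContinuousLinearMap.sub_apply]
      simp only [ContinuousLinearMap.comp_apply]
      rw [hsplit]
      have h1 : ‖(Φt n) (A - B)‖ ≤ ε * ∑ j ∈ Finset.range d, lam ^ j := by
        calc ‖(Φt n) (A - B)‖ ≤ ‖Φt n‖ * ‖A - B‖ := (Φt n).le_opNorm _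
          _ ≤ 1 * ‖A - B‖ := by
              apply mul_le_mul_of_nonneg_right (hΦt n) (norm_nonneg _)
          _ = ‖A - B‖ := one_mul _
          _ ≤ ε * ∑ j ∈ Finset.range d, lam ^ j := ih (n + 1) (by omega)
      have hBle : ‖B‖ ≤ lam ^ d := by
        have := hcontr n hbar hmem
        have hd : s - 1 - n = d := by omega
        rw [hd] at this
        calc ‖B‖ ≤ lam ^ d * ‖hbar‖ := this
          _ ≤ lam ^ d * 1 := by
              apply mul_le_mul_of_nonneg_left hnorm (pow_nonneg hlam0 d)
          _ = lam ^ d := mul_one _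
      have h2 : ‖(Φt n - Φ n) B‖ ≤ ε * lam ^ d := by
        calc ‖(Φt n - Φ n) B‖ ≤ ‖Φt n - Φ n‖ * ‖B‖ := (Φt n - Φ n).le_opNorm _
          _ ≤ ε * lam ^ d := by
              apply mul_le_mul (hdiff n) hBle (norm_nonneg _) hε
      calc ‖(Φt n) (A - B) + (Φt n - Φ n) B‖
          ≤ ‖(Φt n) (A - B)‖ + ‖(Φt n - Φ n) B‖ := norm_add_le _ _
        _ ≤ ε * ∑ j ∈ Finset.range d, lam ^ j + ε * lam ^ d := add_le_add h1 h2
        _ = ε * ∑ j ∈ Finset.range (d + 1), lam ^ j := by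
            rw [Finset.sum_range_succ]; ring
  have hsum : ∑ j ∈ Finset.range (s - 0) , lam ^ j ≤ 1 / (1 - lam) := by
    rw [geom_sum_eq (by intro h; rw [h] at hlam1; exact lt_irrefl 1 hlam1 : lam ≠ 1)]
    have heq : (lam ^ (s - 0) - 1) / (lam - 1) = (1 - lam ^ (s - 0)) / (1 - lam) := by
      rw [← neg_div_neg_eq]; ring_nf
    rw [heq]
    have hp : 0 ≤ lam ^ (s - 0) := pow_nonneg hlam0 _
    rw [div_le_div_iff_of_pos_right hpos]
    linarith
  calc ‖chanCompL Φt 0 s hbar - chanCompL Φ 0 s hbar‖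
      ≤ ε * ∑ j ∈ Finset.range (s - 0), lam ^ j := key (s - 0) 0 rfl
    _ ≤ ε * (1 / (1 - lam)) := mul_le_mul_of_nonneg_left hsum hε
    _ = ε / (1 - lam) := by ring
end

section
/- Shift invariance of the DMERA qubit assignment (Lemma 1): let ℓ₀ ≥ 0 and define recursively a^{(1)} on (ℤ/(2ℓ₀+1))-labelled base vectors as the identity, and a^{(i+1)}_{2x+u} = a^{(i)}_{F_u(x)} where u ∈ {0,1}^d and F_u(x) = (x + (ℓ₀+1)u) mod (2ℓ₀+1) componentwise. Then for every layer i, every lattice vector x in the i-th layer, and every standard unit vector e_n, a^{(i)}_{x + (2ℓ₀+1)e_n} = a^{(i)}_x. -/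
theorem dmera_assignment_shift_invariance
    {Q : Type*} (d ℓ₀ : ℕ) (hd : 1 ≤ d) (a : ℕ → (Fin d → ℤ) → Q)
    (hbase : ∀ x y : Fin d → ℤ,
      (∀ n, x n % (2 * (ℓ₀ : ℤ) + 1) = y n % (2 * (ℓ₀ : ℤ) + 1)) → a 1 x = a 1 y)
    (hrec : ∀ i, 1 ≤ i → ∀ (x u : Fin d → ℤ), (∀ n, u n = 0 ∨ u n = 1) →
      a (i + 1) (fun n => 2 * x n + u n) =
        a i (fun n => (x n + ((ℓ₀ : ℤ) + 1) * u n) % (2 * (ℓ₀ : ℤ) + 1))) :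
    ∀ i, 1 ≤ i → ∀ (x : Fin d → ℤ) (n : Fin d),
      a i (fun m => x m + if m = n then 2 * (ℓ₀ : ℤ) + 1 else 0) = a i x := by
  intro i hi x n
  obtain ⟨j, rfl⟩ : ∃ j, i = j + 1 := ⟨i - 1, by omega⟩
  rcases Nat.eq_zero_or_pos j with hj | hj
  · subst hj
    apply hbase
    intro m
    split_ifs with h
    · have : x m + (2 * (ℓ₀ : ℤ) + 1) = x m + (2 * (ℓ₀ : ℤ) + 1) * 1 := by ring
      rw [this, Int.add_mul_emod_self_left]
    · rw [add_zero]
  · -- layer ≥ 2: decompose into even/odd parts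
    set M : ℤ := 2 * (ℓ₀ : ℤ) + 1 with hM
    set u : Fin d → ℤ := fun m => x m % 2 with hu_def
    set y : Fin d → ℤ := fun m => x m / 2 with hy_def
    have hu : ∀ m, u m = 0 ∨ u m = 1 := by intro m; simp only [hu_def]; omega
    have hx : ∀ m, x m = 2 * y m + u m := by intro m; simp only [hu_def, hy_def]; omega
    set u' : Fin d → ℤ := fun m => if m = n then 1 - u n else u m with hu'_def
    set y' : Fin d → ℤ := fun m => if m = n then y n + (ℓ₀ : ℤ) + u n else y m with hy'_def
    have hu' : ∀ m, u' m = 0 ∨ u' m = 1 := by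
      intro m
      simp only [hu'_def]
      split_ifs
      · rcases hu n with h | h <;> simp [h]
      · exact hu m
    have h1 : (fun m => x m + if m = n then M else 0) = (fun m => 2 * y' m + u' m) := by
      funext m
      simp only [hu'_def, hy'_def]
      split_ifs with h
      · subst h; rw [hx m]; ring
      · rw [add_zero, hx m]
    have e1 : a (j + 1) (fun m => x m + if m = n then M else 0)
        = a j (fun m => (y' m + ((ℓ₀ : ℤ) + 1) * u' m) % M) := by
      rw [h1]; exact hrec j hj y' u' hu'
    have e2 : a (j + 1) x = a j (fun m => (y m + ((ℓ₀ : ℤ) + 1) * u m) % M) := by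
      have hx' : x = fun m => 2 * y m + u m := funext hx
      conv_lhs => rw [hx']
      exact hrec j hj y u hu
    rw [e1, e2]
    congr 1
    funext m
    simp only [hu'_def, hy'_def]
    split_ifs with h
    · subst h
      have key : y m + (ℓ₀ : ℤ) + u m + ((ℓ₀ : ℤ) + 1) * (1 - u m)
          = (y m + ((ℓ₀ : ℤ) + 1) * u m) + M * (1 - u m) := by
        simp only [hM]; ring
      rw [key, Int.add_mul_emod_self_left]
    · rfl
end

section
/- Counting lemma for the DMERA assignment (Lemma 2): with the recursive assignment a^{(i)} as above, the number of distinct physical qubits in the image of a^{(i)} equals (2ℓ₀+1)^d for every layer i ≥ 1. -/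
theorem dmera_assignment_counting
    {Q : Type*} (d ℓ₀ : ℕ) (hd : 1 ≤ d) (a : ℕ → (Fin d → ℤ) → Q)
    (hbase : ∀ x y : Fin d → ℤ,
      (∀ n, x n % (2 * (ℓ₀ : ℤ) + 1) = y n % (2 * (ℓ₀ : ℤ) + 1)) → a 1 x = a 1 y)
    (hbase_inj : ∀ x y : Fin d → ℤ, a 1 x = a 1 y →
      ∀ n, x n % (2 * (ℓ₀ : ℤ) + 1) = y n % (2 * (ℓ₀ : ℤ) + 1))
    (hrec : ∀ i, 1 ≤ i → ∀ (x u : Fin d → ℤ), (∀ n, u n = 0 ∨ u n = 1) →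
      a (i + 1) (fun n => 2 * x n + u n) =
        a i (fun n => (x n + ((ℓ₀ : ℤ) + 1) * u n) % (2 * (ℓ₀ : ℤ) + 1))) :
    ∀ i, 1 ≤ i → Set.ncard (Set.range (a i)) = (2 * ℓ₀ + 1) ^ d := by
  set m : ℤ := 2 * (ℓ₀ : ℤ) + 1 with hm
  have hmpos : 0 < m := by positivity
  -- arithmetic key lemma
  have L1 : ∀ p q u v : ℤ,
      ((p + ((ℓ₀ : ℤ) + 1) * u) % m = (q + ((ℓ₀ : ℤ) + 1) * v) % m) ↔
      ((2 * p + u) % m = (2 * q + v) % m) := by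
    intro p q u v
    constructor
    · intro h
      have hd1 : m ∣ (q + ((ℓ₀ : ℤ) + 1) * v) - (p + ((ℓ₀ : ℤ) + 1) * u) :=
        Int.ModEq.dvd h
      have : m ∣ (2 * q + v) - (2 * p + u) := by
        obtain ⟨c, hc⟩ := hd1
        rw [hm] at hc
        exact ⟨2 * c - (v - u), by rw [hm]; linear_combination 2 * hc⟩
      exact Int.ModEq.symm (Int.modEq_iff_dvd.mpr this) |>.symm
    · intro h
      have hd1 : m ∣ (2 * q + v) - (2 * p + u) := Int.ModEq.dvd h
      have : m ∣ (q + ((ℓ₀ : ℤ) + 1) * v) - (p + ((ℓ₀ : ℤ) + 1) * u) := by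
        obtain ⟨c, hc⟩ := hd1
        rw [hm] at hc
        exact ⟨((ℓ₀ : ℤ) + 1) * c - (q - p), by
          rw [hm]; linear_combination ((ℓ₀ : ℤ) + 1) * hc⟩
      exact Int.ModEq.symm (Int.modEq_iff_dvd.mpr this) |>.symm
  -- key characterization
  have key : ∀ i, 1 ≤ i → ∀ x y : Fin d → ℤ,
      a i x = a i y ↔ ∀ n, x n % m = y n % m := by
    intro i hi
    induction i with
    | zero => omega
    | succ j ih =>
      rcases Nat.lt_or_ge 1 (j + 1) with h1 | h1
      · have hj : 1 ≤ j := by omega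
        intro x y
        have hu : ∀ n, (x n % 2) = 0 ∨ (x n % 2) = 1 := fun n => by omega
        have hv : ∀ n, (y n % 2) = 0 ∨ (y n % 2) = 1 := fun n => by omega
        have hx : x = fun n => 2 * (x n / 2) + x n % 2 := by
          funext n; rw [Int.mul_ediv_add_emod]
        have hy : y = fun n => 2 * (y n / 2) + y n % 2 := by
          funext n; rw [Int.mul_ediv_add_emod]
        rw [hx, hy, hrec j hj _ _ hu, hrec j hj _ _ hv, ih hj]
        constructor
        · intro h n
          have := h n
          simp only [Int.emod_emod_of_dvd _ dvd_rfl] at this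
          exact (L1 _ _ _ _).mp this
        · intro h n
          simp only [Int.emod_emod_of_dvd _ dvd_rfl]
          exact (L1 _ _ _ _).mpr (h n)
      · have : j + 1 = 1 := by omega
        rw [this]
        intro x y
        exact ⟨fun h => hbase_inj x y h, fun h => hbase x y h⟩
  intro i hi
  -- bijection with Fin d → Fin (2ℓ₀+1)
  set f : (Fin d → Fin (2 * ℓ₀ + 1)) → Q := fun v => a i (fun n => (v n : ℤ)) with hf
  have hrange : Set.range (a i) = Set.range f := by
    apply Set.Subset.antisymm
    · rintro q ⟨x, rfl⟩
      refine ⟨fun n => ⟨(x n % m).toNat, ?_⟩, ?_⟩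
      · have h0 : 0 ≤ x n % m := Int.emod_nonneg _ (by omega)
        have h1 : x n % m < m := Int.emod_lt_of_pos _ hmpos
        omega
      · simp only [hf]
        rw [key i hi]
        intro n
        have h0 : 0 ≤ x n % m := Int.emod_nonneg _ (by omega)
        simp only [Int.toNat_of_nonneg h0]
        rw [Int.emod_emod_of_dvd _ dvd_rfl]
    · rintro q ⟨v, rfl⟩
      exact ⟨_, rfl⟩
  have hinj : Function.Injective f := by
    intro v w h
    have := (key i hi _ _).mp h
    funext n
    have hn := this n
    have hv0 : (0 : ℤ) ≤ (v n : ℤ) := by positivity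
    have hv1 : ((v n : ℤ)) < m := by
      have := (v n).isLt; push_cast [hm]; omega
    have hw0 : (0 : ℤ) ≤ (w n : ℤ) := by positivity
    have hw1 : ((w n : ℤ)) < m := by
      have := (w n).isLt; push_cast [hm]; omega
    rw [Int.emod_eq_of_lt hv0 hv1, Int.emod_eq_of_lt hw0 hw1] at hn
    exact Fin.ext (by exact_mod_cast hn)
  rw [hrange, ← Nat.card_coe_set_eq, Nat.card_range_of_injective hinj]
  simp [Nat.card_eq_fintype_card]
end

section
/- Collision characterization for the DMERA assignment (Theorem 1): for any two lattice vectors x, y on the i-th layer, a^{(i)}_x = a^{(i)}_y if and only if x − y = (2ℓ₀+1)z for some integer-valued vector z, i.e., if and only if x ≡ y (mod 2ℓ₀+1) componentwise. -/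
theorem dmera_assignment_collision
    {Q : Type*} (d ℓ₀ : ℕ) (hd : 1 ≤ d) (a : ℕ → (Fin d → ℤ) → Q)
    (hbase : ∀ x y : Fin d → ℤ,
      (∀ n, x n % (2 * (ℓ₀ : ℤ) + 1) = y n % (2 * (ℓ₀ : ℤ) + 1)) → a 1 x = a 1 y)
    (hbase_inj : ∀ x y : Fin d → ℤ, a 1 x = a 1 y →
      ∀ n, x n % (2 * (ℓ₀ : ℤ) + 1) = y n % (2 * (ℓ₀ : ℤ) + 1))
    (hrec : ∀ i, 1 ≤ i → ∀ (x u : Fin d → ℤ), (∀ n, u n = 0 ∨ u n = 1) →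
      a (i + 1) (fun n => 2 * x n + u n) =
        a i (fun n => (x n + ((ℓ₀ : ℤ) + 1) * u n) % (2 * (ℓ₀ : ℤ) + 1))) :
    ∀ i, 1 ≤ i → ∀ x y : Fin d → ℤ,
      a i x = a i y ↔ ∀ n, (2 * (ℓ₀ : ℤ) + 1) ∣ (x n - y n) := by
  set m : ℤ := 2 * (ℓ₀ : ℤ) + 1 with hm
  have hmod : ∀ u v : ℤ, u % m = v % m ↔ m ∣ u - v := fun u v => by
    rw [Int.emod_eq_emod_iff_emod_sub_eq_zero, Int.dvd_iff_emod_eq_zero]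
  have hkey : ∀ u : ℤ, 2 * (u / 2 + ((ℓ₀ : ℤ) + 1) * (u % 2)) = u + m * (u % 2) := by
    intro u
    have h1 : 2 * (u / 2) = u - u % 2 := by omega
    rw [hm]; linear_combination h1
  have hdvd2 : ∀ t : ℤ, m ∣ 2 * t → m ∣ t := by
    intro t ht
    have h : t = ((ℓ₀ : ℤ) + 1) * (2 * t) - m * t := by rw [hm]; ring
    rw [h]
    exact dvd_sub (Dvd.dvd.mul_left ht _) (Dvd.intro t rfl)
  have hstep : ∀ u v : ℤ,
      m ∣ (u / 2 + ((ℓ₀ : ℤ) + 1) * (u % 2)) % m - (v / 2 + ((ℓ₀ : ℤ) + 1) * (v % 2)) % m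
        ↔ m ∣ u - v := by
    intro u v
    rw [← hmod, Int.emod_emod_of_dvd _ dvd_rfl, Int.emod_emod_of_dvd _ dvd_rfl, hmod]
    constructor
    · intro h
      have h2 : m ∣ 2 * (u / 2 + ((ℓ₀ : ℤ) + 1) * (u % 2) - (v / 2 + ((ℓ₀ : ℤ) + 1) * (v % 2))) :=
        Dvd.dvd.mul_left h 2
      have h3 : u - v = 2 * (u / 2 + ((ℓ₀ : ℤ) + 1) * (u % 2)
          - (v / 2 + ((ℓ₀ : ℤ) + 1) * (v % 2))) - m * (u % 2) + m * (v % 2) := by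
        linear_combination hkey v - hkey u
      rw [h3]
      exact dvd_add (dvd_sub h2 ⟨u % 2, rfl⟩) ⟨v % 2, rfl⟩
    · intro h
      apply hdvd2
      have h3 : 2 * (u / 2 + ((ℓ₀ : ℤ) + 1) * (u % 2) - (v / 2 + ((ℓ₀ : ℤ) + 1) * (v % 2)))
          = (u - v) + m * (u % 2) - m * (v % 2) := by linear_combination hkey u - hkey v
      rw [h3]
      exact dvd_sub (dvd_add h ⟨u % 2, rfl⟩) ⟨v % 2, rfl⟩
  intro i hi
  induction i, hi using Nat.le_induction with
  | base =>
    intro x y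
    exact ⟨fun h n => (hmod _ _).1 (hbase_inj x y h n),
      fun h => hbase x y fun n => (hmod _ _).2 (h n)⟩
  | succ i hi ih =>
    intro x y
    have hx : ∀ z : Fin d → ℤ,
        a (i + 1) z = a i (fun n => (z n / 2 + ((ℓ₀ : ℤ) + 1) * (z n % 2)) % m) := by
      intro z
      have h := hrec i hi (fun n => z n / 2) (fun n => z n % 2) (fun n => show z n % 2 = 0 ∨ z n % 2 = 1 by omega)
      have hfun : (fun n => 2 * (z n / 2) + z n % 2) = z := funext fun n => by omega
      rw [hfun] at h
      exact h
    rw [hx x, hx y, ih]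
    constructor
    · intro h n; exact (hstep (x n) (y n)).1 (h n)
    · intro h n; exact (hstep (x n) (y n)).2 (h n)
end

section
/- Distinctness in small cubes: under the recursive DMERA assignment, any two distinct circuit qubits at layer i whose coordinate vectors x ≠ y satisfy ‖x − y‖_∞ ≤ 2ℓ₀ are assigned distinct physical qubits. -/
theorem dmera_assignment_distinct_in_cube
    {Q : Type*} (d ℓ₀ : ℕ) (hd : 1 ≤ d) (a : ℕ → (Fin d → ℤ) → Q)
    (hbase : ∀ x y : Fin d → ℤ,
      (∀ n, x n % (2 * (ℓ₀ : ℤ) + 1) = y n % (2 * (ℓ₀ : ℤ) + 1)) → a 1 x = a 1 y)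
    (hbase_inj : ∀ x y : Fin d → ℤ, a 1 x = a 1 y →
      ∀ n, x n % (2 * (ℓ₀ : ℤ) + 1) = y n % (2 * (ℓ₀ : ℤ) + 1))
    (hrec : ∀ i, 1 ≤ i → ∀ (x u : Fin d → ℤ), (∀ n, u n = 0 ∨ u n = 1) →
      a (i + 1) (fun n => 2 * x n + u n) =
        a i (fun n => (x n + ((ℓ₀ : ℤ) + 1) * u n) % (2 * (ℓ₀ : ℤ) + 1))) :
    ∀ i, 1 ≤ i → ∀ x y : Fin d → ℤ, x ≠ y →
      (∀ n, |x n - y n| ≤ 2 * (ℓ₀ : ℤ)) → a i x ≠ a i y := by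
  set m : ℤ := 2 * (ℓ₀ : ℤ) + 1 with hm
  have key : ∀ i, 1 ≤ i → ∀ x y : Fin d → ℤ, a i x = a i y →
      ∀ n, x n % m = y n % m := by
    intro i hi
    induction i, hi using Nat.le_induction with
    | base => exact hbase_inj
    | succ i hi ih =>
      intro x y hxy n
      set u : Fin d → ℤ := fun n => x n % 2 with hu
      set v : Fin d → ℤ := fun n => y n % 2 with hv
      have hux : ∀ n, u n = 0 ∨ u n = 1 := fun n => Int.emod_two_eq_zero_or_one (x n)
      have hvy : ∀ n, v n = 0 ∨ v n = 1 := fun n => Int.emod_two_eq_zero_or_one (y n)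
      have hxeq : x = fun n => 2 * (x n / 2) + u n := by
        funext n; simp [hu]; omega
      have hyeq : y = fun n => 2 * (y n / 2) + v n := by
        funext n; simp [hv]; omega
      have h1 := hrec i hi (fun n => x n / 2) u hux
      have h2 := hrec i hi (fun n => y n / 2) v hvy
      rw [hxeq] at hxy; rw [hyeq] at hxy
      rw [h1, h2] at hxy
      have h3 := ih _ _ hxy n
      simp only [Int.emod_emod_of_dvd, Int.emod_emod_of_dvd _ (dvd_refl m)] at h3
      have hdvd : m ∣ (x n / 2 + ((ℓ₀ : ℤ) + 1) * u n) - (y n / 2 + ((ℓ₀ : ℤ) + 1) * v n) :=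
        Int.ModEq.dvd (Int.ModEq.symm h3)
      obtain ⟨k, hk⟩ := hdvd
      have hxn : x n = 2 * (x n / 2) + u n := by simp [hu]; omega
      have hyn : y n = 2 * (y n / 2) + v n := by simp [hv]; omega
      have heq : x n - y n = m * (2 * k - (u n - v n)) := by
        rw [hm] at hk ⊢
        linear_combination 2 * hk + hxn - hyn
      have hdvd2 : m ∣ x n - y n := ⟨_, heq⟩
      exact ((Int.modEq_iff_dvd.mpr hdvd2).symm : Int.ModEq m (x n) (y n))
  intro i hi x y hne hcube hcontra
  apply hne
  funext n
  have hdvd : m ∣ x n - y n := Int.ModEq.dvd (Int.ModEq.symm (key i hi x y hcontra n))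
  have habs := hcube n
  have : x n - y n = 0 := Int.eq_zero_of_abs_lt_dvd hdvd (by omega)
  omega
end
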